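/- arXiv:2507.20588 — 2 statements merged into one kernel-verified Lean document; each statement's English description precedes it below -/
import Mathlib

section
/- Let k be a commutative ring with unity, C a nonempty small category, 𝔄: C → k-Alg a precosheaf of unital k-algebras on C, and 𝔐: C → k-Mod an 𝔄-bimodule. Then the extension category algebra 𝔄 ⋉ 𝔐, i.e., the free k-module on symbols rmf (f ∈ Mor C with codomain y, r ∈ 𝔄(y), m ∈ 𝔐(y)) with the product sng * rmf = (𝔄(g)(r)s)(𝔄(g)(r)·n + 𝔐(g)(m)·s)(fg) when dom(g) = cod(f) and 0 otherwise, extended k-bilinearly, is an associative k-algebra. -/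
open CategoryTheory MulOpposite
open scoped Classical

universe u

/-- A precosheaf of unital `k`-algebras on a small category `C`:
a functor `C → k-Alg`. -/
structure AlgPrecosheaf (k : Type u) [CommRing k] (C : Type u) [SmallCategory C] where
  A : C → Type u
  [ringA : ∀ x, Ring (A x)]
  [algA : ∀ x, Algebra k (A x)]
  map : ∀ {x y : C}, (x ⟶ y) → (A x →ₐ[k] A y)
  map_id : ∀ x : C, map (𝟙 x) = AlgHom.id k (A x)
  map_comp : ∀ {x y z : C} (f : x ⟶ y) (g : y ⟶ z), map (f ≫ g) = (map g).comp (map f)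

attribute [instance] AlgPrecosheaf.ringA AlgPrecosheaf.algA

variable {k : Type u} [CommRing k] {C : Type u} [SmallCategory C]

/-- An `𝔄`-bimodule: a functor `𝔐 : C → k-Mod` such that each `𝔐(x)` is an
`𝔄(x)`-bimodule and `𝔐(f)` is compatible with both actions along `𝔄(f)`. -/
structure AlgBimod (𝔸 : AlgPrecosheaf k C) where
  M : C → Type u
  [addM : ∀ x, AddCommGroup (M x)]
  [modk : ∀ x, Module k (M x)]
  [modl : ∀ x, Module (𝔸.A x) (M x)]
  [modr : ∀ x, Module (𝔸.A x)ᵐᵒᵖ (M x)]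
  [smulComm : ∀ x, SMulCommClass (𝔸.A x) (𝔸.A x)ᵐᵒᵖ (M x)]
  [towl : ∀ x, IsScalarTower k (𝔸.A x) (M x)]
  [towr : ∀ x, IsScalarTower k (𝔸.A x)ᵐᵒᵖ (M x)]
  map : ∀ {x y : C}, (x ⟶ y) → (M x →ₗ[k] M y)
  map_id : ∀ x : C, map (𝟙 x) = LinearMap.id
  map_comp : ∀ {x y z : C} (f : x ⟶ y) (g : y ⟶ z), map (f ≫ g) = (map g).comp (map f)
  map_smul_left : ∀ {x y : C} (f : x ⟶ y) (r : 𝔸.A x) (m : M x),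
    map f (r • m) = 𝔸.map f r • map f m
  map_smul_right : ∀ {x y : C} (f : x ⟶ y) (s : 𝔸.A x) (m : M x),
    map f (op s • m) = op (𝔸.map f s) • map f m

attribute [instance] AlgBimod.addM AlgBimod.modk AlgBimod.modl AlgBimod.modr
  AlgBimod.smulComm AlgBimod.towl AlgBimod.towr

variable {𝔸 : AlgPrecosheaf k C}

/-- The underlying `k`-module of the extension category algebra `𝔄 ⋉ 𝔐`: the free
`k`-module spanned by the symbols `rmf` with `f : x ⟶ y` a morphism of `C`,
`r ∈ 𝔄(y)`, `m ∈ 𝔐(y)`; that is, `⨁_{f ∈ Mor C} (𝔄(cod f) × 𝔐(cod f))`. -/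
abbrev ExtCarrier (𝕄 : AlgBimod 𝔸) : Type u :=
  Π₀ (a : Arrow C), (𝔸.A a.right × 𝕄.M a.right)

/-- The multiplication of the extension category algebra `𝔄 ⋉ 𝔐`: on basis symbols,
`sng * rmf = (𝔄(g)(r)s)(𝔄(g)(r)·n + 𝔐(g)(m)·s)(fg)` if `dom(g) = cod(f)` and `0`
otherwise, extended `k`-bilinearly.  Here `u` carries the left factors `sng`
(supported at arrows `g`) and `v` the right factors `rmf` (supported at arrows `f`). -/
noncomputable def extMul (𝕄 : AlgBimod 𝔸) (u v : ExtCarrier 𝕄) : ExtCarrier 𝕄 :=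
  u.sum fun a q =>      -- `a` is the arrow `g`, `q = (s, n)`
    v.sum fun b p =>    -- `b` is the arrow `f`, `p = (r, m)`
      if h : a.left = b.right then
        let g' : b.right ⟶ a.right := eqToHom h.symm ≫ (a.hom : a.left ⟶ a.right)
        let f' : b.left ⟶ b.right := b.hom
        DFinsupp.single (Arrow.mk (f' ≫ g'))
          (𝔸.map g' p.1 * q.1, 𝔸.map g' p.1 • q.2 + op q.1 • 𝕄.map g' p.2)
      else 0

-- auxiliary: SMulCommClass instances
example (𝕄 : AlgBimod 𝔸) (x : C) : SMulCommClass k (𝔸.A x) (𝕄.M x) := inferInstance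
example (𝕄 : AlgBimod 𝔸) (x : C) : SMulCommClass k (𝔸.A x)ᵐᵒᵖ (𝕄.M x) := inferInstance

noncomputable def coreFun (𝕄 : AlgBimod 𝔸) (a b : Arrow C)
    (q : 𝔸.A a.right × 𝕄.M a.right) (p : 𝔸.A b.right × 𝕄.M b.right) : ExtCarrier 𝕄 :=
  if h : a.left = b.right then
    let g' : b.right ⟶ a.right := eqToHom h.symm ≫ (a.hom : a.left ⟶ a.right)
    let f' : b.left ⟶ b.right := b.hom
    DFinsupp.single (Arrow.mk (f' ≫ g'))
      (𝔸.map g' p.1 * q.1, 𝔸.map g' p.1 • q.2 + op q.1 • 𝕄.map g' p.2)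
  else 0

noncomputable def corePair (𝕄 : AlgBimod 𝔸) (a b : Arrow C) :
    (𝔸.A a.right × 𝕄.M a.right) →ₗ[k] (𝔸.A b.right × 𝕄.M b.right) →ₗ[k] ExtCarrier 𝕄 :=
  LinearMap.mk₂ k (coreFun 𝕄 a b)
    (by
      intro q₁ q₂ p
      unfold coreFun
      dsimp only
      by_cases h : a.left = b.right
      · rw [dif_pos h, dif_pos h, dif_pos h, ← DFinsupp.single_add]
        refine congrArg _ (Prod.ext ?_ ?_)
        · simp [mul_add]
        · simp only [Prod.fst_add, Prod.snd_add, Prod.mk_add_mk, smul_add, MulOpposite.op_add, add_smul]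
          abel
      · simp [dif_neg h])
    (by
      intro c q p
      unfold coreFun
      dsimp only
      by_cases h : a.left = b.right
      · rw [dif_pos h, dif_pos h, ← DFinsupp.single_smul]
        refine congrArg _ (Prod.ext ?_ ?_)
        · simp [mul_smul_comm]
        · simp only [Prod.smul_fst, Prod.smul_snd, Prod.smul_mk, smul_add, op_smul,
            smul_assoc]
          congr 1 <;> exact smul_comm _ c _
      · simp [dif_neg h])
    (by
      intro q p₁ p₂
      unfold coreFun
      dsimp only
      by_cases h : a.left = b.right
      · rw [dif_pos h, dif_pos h, dif_pos h, ← DFinsupp.single_add]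
        refine congrArg _ (Prod.ext ?_ ?_)
        · simp [add_mul]
        · simp only [Prod.fst_add, Prod.snd_add, Prod.mk_add_mk, map_add, add_mul,
            add_smul, smul_add]
          abel
      · simp [dif_neg h])
    (by
      intro c q p
      unfold coreFun
      dsimp only
      by_cases h : a.left = b.right
      · rw [dif_pos h, dif_pos h, ← DFinsupp.single_smul]
        refine congrArg _ (Prod.ext ?_ ?_)
        · simp [smul_mul_assoc]
        · simp only [Prod.smul_fst, Prod.smul_snd, Prod.smul_mk, map_smul, smul_add,
            smul_assoc]
          congr 1 <;> exact smul_comm _ c _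
      · simp [dif_neg h])

theorem extMul_eq (𝕄 : AlgBimod 𝔸) (u v : ExtCarrier 𝕄) :
    extMul 𝕄 u v = u.sum fun a q => v.sum fun b p => corePair 𝕄 a b q p := rfl

theorem extMul_zero_left (𝕄 : AlgBimod 𝔸) (v : ExtCarrier 𝕄) : extMul 𝕄 0 v = 0 := by
  rw [extMul_eq, DFinsupp.sum_zero_index]

theorem extMul_zero_right (𝕄 : AlgBimod 𝔸) (u : ExtCarrier 𝕄) : extMul 𝕄 u 0 = 0 := by
  rw [extMul_eq]
  simp only [DFinsupp.sum_zero_index]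
  exact DFinsupp.sum_eq_zero fun _ => rfl

theorem extMul_single_left (𝕄 : AlgBimod 𝔸) (a : Arrow C)
    (q : 𝔸.A a.right × 𝕄.M a.right) (v : ExtCarrier 𝕄) :
    extMul 𝕄 (DFinsupp.single a q) v = v.sum fun b p => corePair 𝕄 a b q p := by
  rw [extMul_eq, DFinsupp.sum_single_index]
  simp only [map_zero, LinearMap.zero_apply]
  exact DFinsupp.sum_eq_zero fun _ => rfl

theorem extMul_single_right (𝕄 : AlgBimod 𝔸) (u : ExtCarrier 𝕄) (b : Arrow C)
    (p : 𝔸.A b.right × 𝕄.M b.right) :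
    extMul 𝕄 u (DFinsupp.single b p) = u.sum fun a q => corePair 𝕄 a b q p := by
  rw [extMul_eq]
  congr 1
  funext a q
  rw [DFinsupp.sum_single_index (by simp)]

theorem extMul_single_single (𝕄 : AlgBimod 𝔸) (a b : Arrow C)
    (q : 𝔸.A a.right × 𝕄.M a.right) (p : 𝔸.A b.right × 𝕄.M b.right) :
    extMul 𝕄 (DFinsupp.single a q) (DFinsupp.single b p) = coreFun 𝕄 a b q p := by
  rw [extMul_single_left, DFinsupp.sum_single_index (by simp)]
  rfl

theorem extMul_add_left (𝕄 : AlgBimod 𝔸) (u v w : ExtCarrier 𝕄) :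
    extMul 𝕄 (u + v) w = extMul 𝕄 u w + extMul 𝕄 v w := by
  rw [extMul_eq, extMul_eq, extMul_eq]
  refine DFinsupp.sum_add_index (fun a => ?_) (fun a q₁ q₂ => ?_)
  · simp only [map_zero, LinearMap.zero_apply]
    exact DFinsupp.sum_eq_zero fun _ => rfl
  · rw [← DFinsupp.sum_add]
    congr 1
    funext b p
    simp [map_add]

theorem extMul_add_right (𝕄 : AlgBimod 𝔸) (u v w : ExtCarrier 𝕄) :
    extMul 𝕄 u (v + w) = extMul 𝕄 u v + extMul 𝕄 u w := by
  rw [extMul_eq, extMul_eq, extMul_eq, ← DFinsupp.sum_add]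
  congr 1
  funext a q
  exact DFinsupp.sum_add_index (fun b => by simp) (fun b p₁ p₂ => by simp)

theorem ecSmul_zero (𝕄 : AlgBimod 𝔸) (c : k) : c • (0 : ExtCarrier 𝕄) = 0 := by
  refine DFinsupp.ext fun i => ?_
  rw [DFinsupp.smul_apply, DFinsupp.zero_apply, smul_zero]

theorem ecSmul_add (𝕄 : AlgBimod 𝔸) (c : k) (x y : ExtCarrier 𝕄) :
    c • (x + y) = c • x + c • y := by
  refine DFinsupp.ext fun i => ?_
  rw [DFinsupp.smul_apply, DFinsupp.add_apply, DFinsupp.add_apply, DFinsupp.smul_apply,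
    DFinsupp.smul_apply, smul_add]

/-- `c • ·` on `ExtCarrier` as an additive monoid hom. -/
noncomputable def ecSmulHom (𝕄 : AlgBimod 𝔸) (c : k) : ExtCarrier 𝕄 →+ ExtCarrier 𝕄 where
  toFun := fun x => c • x
  map_zero' := ecSmul_zero 𝕄 c
  map_add' := ecSmul_add 𝕄 c

theorem ecSmul_sum (𝕄 : AlgBimod 𝔸) (c : k) (f : ExtCarrier 𝕄)
    (h : ∀ a : Arrow C, (𝔸.A a.right × 𝕄.M a.right) → ExtCarrier 𝕄) :
    c • f.sum h = f.sum fun a b => c • h a b :=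
  map_sum (ecSmulHom 𝕄 c) _ _

theorem corePair_smul_left (𝕄 : AlgBimod 𝔸) (a b : Arrow C) (c : k)
    (q : 𝔸.A a.right × 𝕄.M a.right) (p : 𝔸.A b.right × 𝕄.M b.right) :
    corePair 𝕄 a b (c • q) p = c • corePair 𝕄 a b q p := by
  rw [map_smul, LinearMap.smul_apply]

theorem corePair_smul_right (𝕄 : AlgBimod 𝔸) (a b : Arrow C) (c : k)
    (q : 𝔸.A a.right × 𝕄.M a.right) (p : 𝔸.A b.right × 𝕄.M b.right) :
    corePair 𝕄 a b q (c • p) = c • corePair 𝕄 a b q p := by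
  rw [map_smul]

theorem extMul_smul_left (𝕄 : AlgBimod 𝔸) (c : k) (u v : ExtCarrier 𝕄) :
    extMul 𝕄 (c • u) v = c • extMul 𝕄 u v := by
  induction u using DFinsupp.induction with
  | h0 => rw [ecSmul_zero, extMul_zero_left, ecSmul_zero]
  | ha a q u _ _ ih =>
    rw [ecSmul_add, extMul_add_left, ← DFinsupp.single_smul, extMul_add_left, ecSmul_add, ih,
      extMul_single_left, extMul_single_left, ecSmul_sum]
    exact congrArg (· + c • extMul 𝕄 u v) (congrArg (DFinsupp.sum v)
      (funext fun b => funext fun p => corePair_smul_left 𝕄 a b c q p))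

theorem extMul_smul_right (𝕄 : AlgBimod 𝔸) (c : k) (u v : ExtCarrier 𝕄) :
    extMul 𝕄 u (c • v) = c • extMul 𝕄 u v := by
  induction v using DFinsupp.induction with
  | h0 => rw [ecSmul_zero, extMul_zero_right, ecSmul_zero]
  | ha b p v _ _ ih =>
    rw [ecSmul_add, extMul_add_right, ← DFinsupp.single_smul, extMul_add_right, ecSmul_add, ih,
      extMul_single_right, extMul_single_right, ecSmul_sum]
    exact congrArg (· + c • extMul 𝕄 u v) (congrArg (DFinsupp.sum u)
      (funext fun a => funext fun q => corePair_smul_right 𝕄 a b c q p))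

theorem single_arrow_congr (𝕄 : AlgBimod 𝔸) {X Y : C} (h h' : X ⟶ Y) (hh : h = h')
    (val : 𝔸.A Y × 𝕄.M Y) :
    (DFinsupp.single (Arrow.mk h) val : ExtCarrier 𝕄) = DFinsupp.single (Arrow.mk h') val := by
  cases hh; rfl

theorem extMul_assoc_single (𝕄 : AlgBimod 𝔸) (a b c : Arrow C)
    (q : 𝔸.A a.right × 𝕄.M a.right) (p : 𝔸.A b.right × 𝕄.M b.right)
    (t : 𝔸.A c.right × 𝕄.M c.right) :
    extMul 𝕄 (extMul 𝕄 (DFinsupp.single a q) (DFinsupp.single b p)) (DFinsupp.single c t) =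
      extMul 𝕄 (DFinsupp.single a q) (extMul 𝕄 (DFinsupp.single b p) (DFinsupp.single c t)) := by
  obtain ⟨x₁, y₁, g, rfl⟩ : ∃ (x y : C) (g : x ⟶ y), a = Arrow.mk g := ⟨_, _, a.hom, rfl⟩
  obtain ⟨x₂, y₂, f, rfl⟩ : ∃ (x y : C) (g : x ⟶ y), b = Arrow.mk g := ⟨_, _, b.hom, rfl⟩
  obtain ⟨x₃, y₃, e, rfl⟩ : ∃ (x y : C) (g : x ⟶ y), c = Arrow.mk g := ⟨_, _, c.hom, rfl⟩
  by_cases h₁ : x₁ = y₂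
  · by_cases h₂ : x₂ = y₃
    · subst h₁; subst h₂
      obtain ⟨s, n⟩ := q
      obtain ⟨r, m⟩ := p
      obtain ⟨w, l⟩ := t
      rw [extMul_single_single, extMul_single_single]
      unfold coreFun
      simp only [Functor.id_obj, eqToHom_refl, Category.id_comp, dif_pos rfl, dite_true, eq_self_iff_true, Arrow.mk_left, Arrow.mk_right, Arrow.mk_hom]
      rw [extMul_single_single, extMul_single_single]
      unfold coreFun
      simp only [Functor.id_obj, eqToHom_refl, Category.id_comp, dif_pos rfl, dite_true,
        eq_self_iff_true, Category.assoc, Arrow.mk_left, Arrow.mk_right, Arrow.mk_hom]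
      refine Eq.trans (single_arrow_congr 𝕄 _ _ (by simp) _) (congrArg _ (Prod.ext ?_ ?_))
      · simp only [AlgPrecosheaf.map_comp, AlgHom.comp_apply, map_mul, mul_assoc]
      · simp only [AlgPrecosheaf.map_comp, AlgHom.comp_apply, AlgBimod.map_comp,
          LinearMap.comp_apply, map_mul, map_add, AlgBimod.map_smul_left, AlgBimod.map_smul_right,
          smul_add, mul_smul, MulOpposite.op_mul, add_smul]
        rw [add_assoc]
        congr 1
        congr 1
        exact smul_comm _ _ _
    · subst h₁
      simp only [extMul_single_single]
      unfold coreFun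
      simp only [Functor.id_obj, eqToHom_refl, Category.id_comp, dif_pos rfl, dite_true,
        eq_self_iff_true, Arrow.mk_left, Arrow.mk_right, Arrow.mk_hom, dif_neg h₂,
        extMul_zero_right]
      simp only [extMul_single_single]
      unfold coreFun
      simp only [Arrow.mk_left, Arrow.mk_right, dif_neg h₂]
  · simp only [extMul_single_single]
    unfold coreFun
    by_cases h₂ : x₂ = y₃
    · subst h₂
      simp only [Functor.id_obj, eqToHom_refl, Category.id_comp, dif_pos rfl, dite_true,
        eq_self_iff_true, Arrow.mk_left, Arrow.mk_right, Arrow.mk_hom, dif_neg h₁,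
        extMul_zero_left]
      simp only [extMul_single_single]
      unfold coreFun
      simp only [Arrow.mk_left, Arrow.mk_right, dif_neg h₁]
    · simp only [Arrow.mk_left, Arrow.mk_right, Arrow.mk_hom, dif_neg h₁, dif_neg h₂, extMul_zero_left, extMul_zero_right]

theorem extMul_assoc (𝕄 : AlgBimod 𝔸) (u v w : ExtCarrier 𝕄) :
    extMul 𝕄 (extMul 𝕄 u v) w = extMul 𝕄 u (extMul 𝕄 v w) := by
  induction u using DFinsupp.induction with
  | h0 => simp only [extMul_zero_left, extMul_zero_right]
  | ha a q u _ _ ihu =>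
    rw [extMul_add_left, extMul_add_left, extMul_add_left, ihu]
    refine congrArg (· + extMul 𝕄 u (extMul 𝕄 v w)) ?_
    clear ihu
    induction v using DFinsupp.induction with
    | h0 => simp only [extMul_zero_left, extMul_zero_right]
    | ha b p v _ _ ihv =>
      rw [extMul_add_right, extMul_add_left, extMul_add_left, extMul_add_right, ihv]
      refine congrArg (· + extMul 𝕄 (DFinsupp.single a q) (extMul 𝕄 v w)) ?_
      clear ihv
      induction w using DFinsupp.induction with
      | h0 => simp only [extMul_zero_left, extMul_zero_right]
      | ha c t w _ _ ihw =>
        rw [extMul_add_right, extMul_add_right, extMul_add_right, ihw]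
        refine congrArg
          (· + extMul 𝕄 (DFinsupp.single a q) (extMul 𝕄 (DFinsupp.single b p) w)) ?_
        exact extMul_assoc_single 𝕄 a b c q p t


/-- For a nonempty small category `C`, a precosheaf of unital
`k`-algebras `𝔄` on `C` and an `𝔄`-bimodule `𝔐`, the extension category algebra
`𝔄 ⋉ 𝔐` is an associative `k`-algebra: its multiplication is associative and
`k`-bilinear. -/
theorem statement_1 [Nonempty C] (𝕄 : AlgBimod 𝔸) :
    (∀ u v w : ExtCarrier 𝕄, extMul 𝕄 (extMul 𝕄 u v) w = extMul 𝕄 u (extMul 𝕄 v w)) ∧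
    (∀ u v w : ExtCarrier 𝕄, extMul 𝕄 (u + v) w = extMul 𝕄 u w + extMul 𝕄 v w) ∧
    (∀ u v w : ExtCarrier 𝕄, extMul 𝕄 u (v + w) = extMul 𝕄 u v + extMul 𝕄 u w) ∧
    (∀ (c : k) (u v : ExtCarrier 𝕄),
      extMul 𝕄 (c • u) v = c • extMul 𝕄 u v ∧ extMul 𝕄 u (c • v) = c • extMul 𝕄 u v) :=
  ⟨extMul_assoc 𝕄, fun u v w => extMul_add_left 𝕄 u v w, fun u v w => extMul_add_right 𝕄 u v w,
    fun c u v => ⟨extMul_smul_left 𝕄 c u v, extMul_smul_right 𝕄 c u v⟩⟩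
end

section
/- Let k be a commutative ring with unity, C a small category, 𝔄: C → k-Alg a precosheaf of unital k-algebras on C, and 𝔑: C → k-Mod a right 𝔄-module. Then the Grothendieck construction Gr_C(𝔄,𝔑) is a category: the composition law (r,m,f)∘(s,n,g) = (𝔄(g)(r)s, n + 𝔑(g)(m)·s, fg) is associative, and for each object x the morphism (1_{𝔄(x)}, 0_{𝔑(x)}, 1_x) is a two-sided identity for this composition. -/
open CategoryTheory MulOpposite

universe u

variable {k : Type u} [CommRing k] {C : Type u} [SmallCategory C]

/-- A right `𝔄`-module: a functor `𝔑 : C → k-Mod` such that each `𝔑(x)` is a right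
`𝔄(x)`-module and `𝔑(f)(m·s) = 𝔑(f)(m)·𝔄(f)(s)`. -/
structure AlgRightMod (𝔸 : AlgPrecosheaf k C) where
  N : C → Type u
  [addN : ∀ x, AddCommGroup (N x)]
  [modk : ∀ x, Module k (N x)]
  [modr : ∀ x, Module (𝔸.A x)ᵐᵒᵖ (N x)]
  [towr : ∀ x, IsScalarTower k (𝔸.A x)ᵐᵒᵖ (N x)]
  map : ∀ {x y : C}, (x ⟶ y) → (N x →ₗ[k] N y)
  map_id : ∀ x : C, map (𝟙 x) = LinearMap.id
  map_comp : ∀ {x y z : C} (f : x ⟶ y) (g : y ⟶ z), map (f ≫ g) = (map g).comp (map f)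
  map_smul_right : ∀ {x y : C} (f : x ⟶ y) (s : 𝔸.A x) (m : N x),
    map f (op s • m) = op (𝔸.map f s) • map f m

attribute [instance] AlgRightMod.addN AlgRightMod.modk AlgRightMod.modr AlgRightMod.towr

variable {𝔸 : AlgPrecosheaf k C}

/-- The composition law of the Grothendieck construction `Gr_C(𝔄, 𝔑)` of `𝔄` and a
right `𝔄`-module `𝔑`: `(r, m, f) ∘ (s, n, g) = (𝔄(g)(r)s, n + 𝔑(g)(m)·s, fg)`. -/
def grNComp (𝕟 : AlgRightMod 𝔸) {x y z : C}
    (p : 𝔸.A y × 𝕟.N y × (x ⟶ y)) (q : 𝔸.A z × 𝕟.N z × (y ⟶ z)) :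
    𝔸.A z × 𝕟.N z × (x ⟶ z) :=
  (𝔸.map q.2.2 p.1 * q.1,
   q.2.1 + op q.1 • 𝕟.map q.2.2 p.2.1,
   p.2.2 ≫ q.2.2)

/-- The identity morphism `(1_{𝔄(x)}, 0_{𝔑(x)}, 1_x)` of `Gr_C(𝔄, 𝔑)` at `x`. -/
def grNId (𝕟 : AlgRightMod 𝔸) (x : C) : 𝔸.A x × 𝕟.N x × (x ⟶ x) :=
  (1, 0, 𝟙 x)

namespace AlgPrecosheaf

@[simp]
theorem map_id_apply (x : C) (a : 𝔸.A x) : 𝔸.map (𝟙 x) a = a := by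
  rw [𝔸.map_id]; rfl

@[simp]
theorem map_comp_apply {x y z : C} (f : x ⟶ y) (g : y ⟶ z) (a : 𝔸.A x) :
    𝔸.map (f ≫ g) a = 𝔸.map g (𝔸.map f a) := by
  rw [𝔸.map_comp]; rfl

end AlgPrecosheaf

namespace AlgRightMod

variable (𝕟 : AlgRightMod 𝔸)

@[simp]
theorem map_id_apply (x : C) (m : 𝕟.N x) : 𝕟.map (𝟙 x) m = m := by
  rw [𝕟.map_id]; rfl

@[simp]
theorem map_comp_apply {x y z : C} (f : x ⟶ y) (g : y ⟶ z) (m : 𝕟.N x) :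
    𝕟.map (f ≫ g) m = 𝕟.map g (𝕟.map f m) := by
  rw [𝕟.map_comp]; rfl

end AlgRightMod

section GrothendieckConstruction

variable (𝕟 : AlgRightMod 𝔸)

theorem grNComp_assoc {w x y z : C} (p : 𝔸.A x × 𝕟.N x × (w ⟶ x))
    (q : 𝔸.A y × 𝕟.N y × (x ⟶ y)) (t : 𝔸.A z × 𝕟.N z × (y ⟶ z)) :
    grNComp 𝕟 (grNComp 𝕟 p q) t = grNComp 𝕟 p (grNComp 𝕟 q t) := by
  obtain ⟨r, m, f⟩ := p
  obtain ⟨s, n, g⟩ := q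
  obtain ⟨u, v, h⟩ := t
  simp only [grNComp, AlgPrecosheaf.map_comp_apply, AlgRightMod.map_comp_apply, map_mul,
    mul_assoc, map_add, smul_add, 𝕟.map_smul_right, add_assoc, op_mul, mul_smul,
    Category.assoc]

theorem grNId_grNComp {x y : C} (p : 𝔸.A y × 𝕟.N y × (x ⟶ y)) :
    grNComp 𝕟 (grNId 𝕟 x) p = p := by
  simp [grNComp, grNId]

theorem grNComp_grNId {x y : C} (p : 𝔸.A y × 𝕟.N y × (x ⟶ y)) :
    grNComp 𝕟 p (grNId 𝕟 y) = p := by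
  simp [grNComp, grNId]

end GrothendieckConstruction

/-- **Statement 10.** The Grothendieck construction `Gr_C(𝔄, 𝔑)` of `𝔄` and a right
`𝔄`-module `𝔑` is a category: its composition law is associative and
`(1_{𝔄(x)}, 0_{𝔑(x)}, 1_x)` is a two-sided identity at each object `x`. -/
theorem statement_10 (𝕟 : AlgRightMod 𝔸) :
    (∀ (w x y z : C) (p : 𝔸.A x × 𝕟.N x × (w ⟶ x)) (q : 𝔸.A y × 𝕟.N y × (x ⟶ y))
        (t : 𝔸.A z × 𝕟.N z × (y ⟶ z)),
        grNComp 𝕟 (grNComp 𝕟 p q) t = grNComp 𝕟 p (grNComp 𝕟 q t)) ∧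
    (∀ (x y : C) (p : 𝔸.A y × 𝕟.N y × (x ⟶ y)),
        grNComp 𝕟 (grNId 𝕟 x) p = p ∧ grNComp 𝕟 p (grNId 𝕟 y) = p) :=
  ⟨fun _ _ _ _ => grNComp_assoc 𝕟, fun _ _ p => ⟨grNId_grNComp 𝕟 p, grNComp_grNId 𝕟 p⟩⟩
end
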